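/- arXiv:2404.12989 — 2 statements merged into one kernel-verified Lean document; each statement's English description precedes it below -/
import Mathlib

section
/- If (A_0(x), ..., A_{t-1}(x)) and (B_0(x), ..., B_{t-1}(x)) are fully interlacing sequences of formal power series in ℝ[[x]], then the series Σ_{i=0}^{t-1} A_{t-1-i}(x) B_i(x) = A_0 B_{t-1} + A_1 B_{t-2} + ... + A_{t-1} B_0 is an AESW series, i.e., its Toeplitz matrix is totally positive. -/
open scoped BigOperators

/-- The coefficient of `x^n` in a power series, for an integer `n`
(zero when `n < 0`). -/
noncomputable def intCoeff (A : PowerSeries ℝ) (n : ℤ) : ℝ :=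
  if 0 ≤ n then PowerSeries.coeff (R := ℝ) n.toNat A else 0

/-- A `ℤ × ℤ` matrix is totally positive (TP) if every finite square
submatrix (rows and columns chosen in increasing order) has nonnegative
determinant. -/
def TP (M : ℤ → ℤ → ℝ) : Prop :=
  ∀ (n : ℕ) (r c : Fin n → ℤ), StrictMono r → StrictMono c →
    0 ≤ (Matrix.of fun a b => M (r a) (c b)).det

/-- The interlacing matrix `Lace(A)` of a `p × q` matrix of formal power
series: the `(u,v)`-entry, for `u = p·u' + i` (`0 ≤ i < p`) and
`v = q·v' + j` (`0 ≤ j < q`), is the coefficient of `x^(v'-u')` in `A i j`. -/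
noncomputable def lace {p q : ℕ} [NeZero p] [NeZero q]
    (A : Fin p → Fin q → PowerSeries ℝ) : ℤ → ℤ → ℝ := fun u v =>
  intCoeff
    (A ⟨(u % (p : ℤ)).toNat, by
          have hp : (0 : ℤ) < (p : ℤ) := by
            exact_mod_cast Nat.pos_of_ne_zero (NeZero.ne p)
          have h1 := Int.emod_nonneg u hp.ne'
          have h2 := Int.emod_lt_of_pos u hp
          omega⟩
       ⟨(v % (q : ℤ)).toNat, by
          have hq : (0 : ℤ) < (q : ℤ) := by
            exact_mod_cast Nat.pos_of_ne_zero (NeZero.ne q)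
          have h1 := Int.emod_nonneg v hq.ne'
          have h2 := Int.emod_lt_of_pos v hq
          omega⟩)
    (v / (q : ℤ) - u / (p : ℤ))

/-- A matrix of formal power series is fully interlacing when its
interlacing matrix is totally positive. -/
def FullyInterlacing {p q : ℕ} [NeZero p] [NeZero q]
    (A : Fin p → Fin q → PowerSeries ℝ) : Prop :=
  TP (lace A)

/-- A sequence of power series viewed as a `p × 1` column matrix. -/
noncomputable def colMat {p : ℕ} (A : Fin p → PowerSeries ℝ) :
    Fin p → Fin 1 → PowerSeries ℝ := fun i _ => A i

/-- `A(x)` interlaces `B(x)`: the `2 × 1` column `(A, B)ᵀ` is fully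
interlacing. -/
def SeriesInterlaces (A B : PowerSeries ℝ) : Prop :=
  FullyInterlacing (colMat ![A, B])

/-- A power series is AESW (a Pólya frequency sequence) when its Toeplitz
matrix `(a_{v-u})` is totally positive. -/
def IsAESW (A : PowerSeries ℝ) : Prop :=
  TP fun u v => intCoeff A (v - u)

/-- The `k`-th Veronese `r`-section `S_k^{(r)} A(x) = ∑_{n ≥ 0} a_{k+rn} xⁿ`. -/
noncomputable def veronese (r k : ℕ) (A : PowerSeries ℝ) : PowerSeries ℝ :=
  PowerSeries.mk fun n => PowerSeries.coeff (R := ℝ) (k + r * n) A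

/-!
Writing `w = q t + i` with `0 ≤ i < t`, the coefficient of `x^(v-u)` in `∑ᵢ A_{t-1-i} Bᵢ` is
`∑_w Lace(A)(-1-w, -1-u) · Lace(B)(w, v)`, a sum with finitely many nonzero terms. So the Toeplitz
matrix of the series is the product of `Lace(B)` with `Lace(A)` flipped about its antidiagonal;
both factors are totally positive, and by the Cauchy–Binet formula every minor of the product is
a sum of products of minors of the factors.
-/

open Finset Matrix

namespace Matrix

variable {R : Type*} [CommRing R] {n : ℕ} {m : Type*}

theorem det_mul_eq_sum_prod_mul_det_submatrix [Fintype m] [DecidableEq m]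
    (A : Matrix (Fin n) m R) (B : Matrix m (Fin n) R) :
    (A * B).det = ∑ g : Fin n → m, (∏ a, A a (g a)) * (B.submatrix g id).det := by
  have hrows : A * B = of fun a => ∑ j, A a j • B j := by
    ext a b; simp [mul_apply, Finset.sum_apply]
  rw [hrows]
  refine ((detRowAlternating (R := R) (n := Fin n)).toMultilinearMap.map_sum
    fun a j => A a j • B j).trans (sum_congr rfl fun g _ => ?_)
  exact MultilinearMap.map_smul_univ _ _ _

theorem sum_perm_prod_mul_det_submatrix (A : Matrix (Fin n) m R) (B : Matrix m (Fin n) R)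
    (w : Fin n → m) :
    ∑ σ : Equiv.Perm (Fin n), (∏ a, A a (w (σ a))) * (B.submatrix (w ∘ σ) id).det
      = (A.submatrix id w).det * (B.submatrix w id).det := by
  have hperm (σ : Equiv.Perm (Fin n)) :
      (B.submatrix (w ∘ σ) id).det = Equiv.Perm.sign σ * (B.submatrix w id).det :=
    det_permute σ (B.submatrix w id)
  simp only [hperm, ← mul_assoc, ← sum_mul]
  rw [← det_transpose (A.submatrix id w), det_apply' (A.submatrix id w)ᵀ]
  congr 1
  exact sum_congr rfl fun σ _ => mul_comm _ _

open Classical in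
/-- The **Cauchy–Binet formula**. -/
theorem det_mul_eq_sum_strictMono [Fintype m] [LinearOrder m]
    (A : Matrix (Fin n) m R) (B : Matrix m (Fin n) R) :
    (A * B).det = ∑ w : {w : Fin n → m // StrictMono w},
      (A.submatrix id w.1).det * (B.submatrix w.1 id).det := by
  rw [det_mul_eq_sum_prod_mul_det_submatrix]
  simp only [← sum_perm_prod_mul_det_submatrix, ← Fintype.sum_prod_type']
  symm
  refine sum_bij_ne_zero (fun p _ _ => p.1.1 ∘ p.2) (fun _ _ _ => mem_univ _) ?_ ?_
    fun _ _ _ => rfl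
  · rintro ⟨⟨w, hw⟩, σ⟩ - - ⟨⟨w', hw'⟩, σ'⟩ - - h
    have hrange : Set.range w = Set.range w' := by
      simpa only [Set.range_comp, EquivLike.range_eq_univ, Set.image_univ] using
        congrArg Set.range h
    obtain rfl : w = w' := hw.range_inj hw' |>.mp hrange
    obtain rfl : σ = σ' := Equiv.ext fun a => hw.injective (congrFun h a)
    rfl
  · intro g _ hg
    have hinj : Function.Injective g := by
      by_contra hninj
      obtain ⟨a, b, hab, hne⟩ : ∃ a b, g a = g b ∧ a ≠ b := by
        simpa [Function.Injective] using hninj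
      exact hg (by rw [det_zero_of_row_eq hne (by ext; simp [hab]), mul_zero])
    refine ⟨(⟨g ∘ Tuple.sort g, ?_⟩, (Tuple.sort g)⁻¹), mem_univ _, ?_, ?_⟩
    · exact (Tuple.monotone_sort g).strictMono_of_injective
        (hinj.comp (Tuple.sort g).injective)
    · simpa [Function.comp_def] using hg
    · ext a; simp

theorem det_mul_nonneg_of_minors_nonneg {S : Type*} [CommRing S] [PartialOrder S]
    [IsOrderedRing S] [Fintype m] [LinearOrder m] (A : Matrix (Fin n) m S)
    (B : Matrix m (Fin n) S)
    (hA : ∀ w : Fin n → m, StrictMono w → 0 ≤ (A.submatrix id w).det)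
    (hB : ∀ w : Fin n → m, StrictMono w → 0 ≤ (B.submatrix w id).det) :
    0 ≤ (A * B).det := by
  rw [det_mul_eq_sum_strictMono]
  exact sum_nonneg fun w _ => mul_nonneg (hA w.1 w.2) (hB w.1 w.2)

end Matrix

theorem TP.comp_strictAnti {M : ℤ → ℤ → ℝ} (hM : TP M) {f g : ℤ → ℤ} (hf : StrictAnti f)
    (hg : StrictAnti g) : TP fun u v => M (f v) (g u) := by
  intro n r c hr hc
  have hrows : StrictMono fun a : Fin n => f (c a.rev) := hf.comp
    (hc.comp_strictAnti Fin.rev_strictAnti)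
  have hcols : StrictMono fun b : Fin n => g (r b.rev) := hg.comp
    (hr.comp_strictAnti Fin.rev_strictAnti)
  have hflip : (of fun a b => M (f (c b)) (g (r a)))
      = (of fun a b => M (f (c a.rev)) (g (r b.rev)))ᵀ.submatrix Fin.revPerm Fin.revPerm := by
    ext a b; simp
  rw [hflip, det_submatrix_equiv_self, det_transpose]
  exact hM n _ _ hrows hcols

theorem TP.of_eq_finsum_mul {M N P : ℤ → ℤ → ℝ} (hM : TP M) (hN : TP N)
    (hfin : ∀ u v, (Function.support fun w => M u w * N w v).Finite)
    (hP : ∀ u v, P u v = ∑ᶠ w, M u w * N w v) : TP P := by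
  classical
  intro n r c hr hc
  let W : Finset ℤ := univ.biUnion fun ab : Fin n × Fin n => (hfin (r ab.1) (c ab.2)).toFinset
  have hmul : (of fun a b => P (r a) (c b))
      = (of fun (a : Fin n) (w : W) => M (r a) w) * of fun (w : W) b => N w (c b) := by
    ext a b
    have hsupp : (Function.support fun w => M (r a) w * N w (c b)) ⊆ W := fun w hw =>
      mem_biUnion.mpr ⟨(a, b), mem_univ _, (hfin _ _).mem_toFinset.mpr hw⟩
    rw [of_apply, hP, finsum_eq_sum_of_support_subset _ hsupp, ← sum_coe_sort W]
    rfl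
  rw [hmul]
  apply det_mul_nonneg_of_minors_nonneg
  · exact fun w hw => hM n r _ hr ((Subtype.strictMono_coe _).comp hw)
  · exact fun w hw => hN n _ c ((Subtype.strictMono_coe _).comp hw) hc

theorem intCoeff_of_neg (X : PowerSeries ℝ) {n : ℤ} (hn : n < 0) : intCoeff X n = 0 := by
  simp [intCoeff, not_le.mpr hn]

theorem intCoeff_sum {ι : Type*} (s : Finset ι) (X : ι → PowerSeries ℝ) (n : ℤ) :
    intCoeff (∑ i ∈ s, X i) n = ∑ i ∈ s, intCoeff (X i) n := by
  unfold intCoeff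
  split_ifs <;> simp

theorem intCoeff_mul (X Y : PowerSeries ℝ) (u v : ℤ) :
    intCoeff (X * Y) (v - u) = ∑ q ∈ Icc u v, intCoeff X (q - u) * intCoeff Y (v - q) := by
  rcases lt_or_ge v u with hvu | huv
  · rw [Icc_eq_empty (not_le.mpr hvu), sum_empty, intCoeff_of_neg _ (by omega)]
  obtain ⟨N, rfl⟩ : ∃ N : ℕ, v = u + N := ⟨(v - u).toNat, by omega⟩
  have hcoeff (Z : PowerSeries ℝ) (k : ℕ) : intCoeff Z k = PowerSeries.coeff k Z := by
    simp [intCoeff]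
  rw [add_sub_cancel_left, hcoeff, PowerSeries.coeff_mul,
    Nat.sum_antidiagonal_eq_sum_range_succ_mk]
  refine sum_nbij' (fun k => u + k) (fun q => (q - u).toNat) ?_ ?_ ?_ ?_ ?_
  · intro k hk
    simp only [mem_range, mem_Icc] at hk ⊢
    omega
  · intro q hq
    simp only [mem_range, mem_Icc] at hq ⊢
    omega
  · intro k _
    simp
  · intro q hq
    simp only [mem_Icc] at hq
    omega
  · intro k hk
    simp only [mem_range] at hk
    rw [add_sub_cancel_left, show u + N - (u + k) = ((N - k : ℕ) : ℤ) by omega, hcoeff, hcoeff]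

theorem neg_one_sub_mul_add {t : ℕ} (q : ℤ) (i : Fin t) :
    -1 - (q * t + i) = (-1 - q) * t + (i.rev : ℕ) := by
  have := i.isLt
  rw [Fin.val_rev]
  push_cast [Nat.cast_sub (show i.val + 1 ≤ t by omega)]
  ring

theorem lace_colMat_mul_add {t : ℕ} [NeZero t] (A : Fin t → PowerSeries ℝ) (q : ℤ) (i : Fin t)
    (v : ℤ) : lace (colMat A) (q * t + i) v = intCoeff (A i) (v - q) := by
  have ht : (t : ℤ) ≠ 0 := Int.natCast_ne_zero.mpr (NeZero.ne t)
  have hi : (0 : ℤ) ≤ i ∧ (i : ℤ) < t := ⟨by positivity, by exact_mod_cast i.isLt⟩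
  have hdiv : (q * t + i) / (t : ℤ) = q := by
    rw [add_comm, Int.add_mul_ediv_right _ _ ht, Int.ediv_eq_zero_of_lt hi.1 hi.2, zero_add]
  have hmod : (q * t + i) % (t : ℤ) = i := by
    rw [add_comm, Int.add_mul_emod_self_right, Int.emod_eq_of_lt hi.1 hi.2]
  simp only [lace, colMat, hdiv, Nat.cast_one, Int.ediv_one]
  congr 2
  ext
  simp [hmod]

theorem intCoeff_mul_intCoeff_of_notMem_Icc (X Y : PowerSeries ℝ) {u v q : ℤ}
    (hq : q ∉ Icc u v) : intCoeff X (q - u) * intCoeff Y (v - q) = 0 := by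
  rw [mem_Icc, not_and_or, not_le, not_le] at hq
  rcases hq with hq | hq
  · rw [intCoeff_of_neg X (by omega), zero_mul]
  · rw [intCoeff_of_neg Y (by omega), mul_zero]

theorem support_intCoeff_rev_mul_intCoeff_subset {t : ℕ} (A B : Fin t → PowerSeries ℝ)
    (u v : ℤ) :
    (Function.support fun p : ℤ × Fin t =>
        intCoeff (A p.2.rev) (p.1 - u) * intCoeff (B p.2) (v - p.1))
      ⊆ (Icc u v ×ˢ univ : Finset (ℤ × Fin t)) := by
  intro p hp
  by_contra hnot
  exact hp (intCoeff_mul_intCoeff_of_notMem_Icc _ _ fun hq => hnot (by simpa using hq))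

section Interlacing

variable {t : ℕ} [NeZero t] (A B : Fin t → PowerSeries ℝ) (u v : ℤ)

theorem lace_rev_mul_lace_divModEquiv_symm (p : ℤ × Fin t) :
    lace (colMat A) (-1 - (Int.divModEquiv t).symm p) (-1 - u)
        * lace (colMat B) ((Int.divModEquiv t).symm p) v
      = intCoeff (A p.2.rev) (p.1 - u) * intCoeff (B p.2) (v - p.1) := by
  rw [Int.divModEquiv_symm_apply, neg_one_sub_mul_add, lace_colMat_mul_add, lace_colMat_mul_add,
    sub_sub_sub_cancel_left]

theorem finite_support_lace_rev_mul_lace :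
    (Function.support fun w => lace (colMat A) (-1 - w) (-1 - u) * lace (colMat B) w v).Finite := by
  refine Set.Finite.of_preimage ?_ (Int.divModEquiv t).symm.surjective
  rw [← Function.support_comp_eq_preimage]
  exact (finite_toSet _).subset <| (funext (lace_rev_mul_lace_divModEquiv_symm A B u v)) ▸
    support_intCoeff_rev_mul_intCoeff_subset A B u v

theorem intCoeff_sum_rev_mul_eq_finsum :
    intCoeff (∑ i, A i.rev * B i) (v - u)
      = ∑ᶠ w, lace (colMat A) (-1 - w) (-1 - u) * lace (colMat B) w v := by
  rw [← finsum_comp_equiv (Int.divModEquiv t).symm]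
  simp only [lace_rev_mul_lace_divModEquiv_symm]
  rw [finsum_eq_sum_of_support_subset _ (support_intCoeff_rev_mul_intCoeff_subset A B u v),
    sum_product_right, intCoeff_sum]
  exact sum_congr rfl fun i _ => intCoeff_mul _ _ u v

end Interlacing

/-- If `(A₀, …, A_{t-1})` and `(B₀, …, B_{t-1})` are fully interlacing
sequences then `∑ᵢ A_{t-1-i} Bᵢ` is an AESW series. -/
theorem stmt9 {t : ℕ} [NeZero t] (A B : Fin t → PowerSeries ℝ)
    (hA : FullyInterlacing (colMat A)) (hB : FullyInterlacing (colMat B)) :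
    IsAESW (∑ i, A i.rev * B i) := by
  have hreflect : StrictAnti fun w : ℤ => -1 - w := fun _ _ h => sub_lt_sub_left h (-1)
  exact TP.of_eq_finsum_mul (hA.comp_strictAnti hreflect hreflect) hB
    (finite_support_lace_rev_mul_lace A B) (intCoeff_sum_rev_mul_eq_finsum A B)
end

section
/- If P(x), Q(x) ∈ ℝ[x] are real-rooted polynomials with nonnegative coefficients and P interlaces Q, then for every positive integer r and every 0 ≤ k < r, the Veronese section S_k^{(r)}P(x) interlaces S_k^{(r)}Q(x). -/
open scoped BigOperators

/-!
The interlacing matrix of `(S_k^{(r)} A, S_k^{(r)} B)ᵀ` is a submatrix of that of `(A, B)ᵀ`: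
its `(u, v)` entry is the `(2r⌊u/2⌋ + (u mod 2), k + rv)` entry of `Lace(A, B)`, and both index maps
are strictly increasing. Total positivity passes to submatrices.
-/

theorem TP.comp {M : ℤ → ℤ → ℝ} (hM : TP M) {f g : ℤ → ℤ} (hf : StrictMono f)
    (hg : StrictMono g) : TP fun u v => M (f u) (g v) :=
  fun n r c hr hc => hM n (f ∘ r) (g ∘ c) (hf.comp hr) (hg.comp hc)

theorem intCoeff_veronese {r k : ℕ} (hk : k < r) (A : PowerSeries ℝ) (m : ℤ) :
    intCoeff (veronese r k A) m = intCoeff A (k + r * m) := by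
  rcases le_or_gt 0 m with hm | hm
  · lift m to ℕ using hm
    have hnat : ((k : ℤ) + r * m) = ((k + r * m : ℕ) : ℤ) := by push_cast; ring
    rw [hnat]
    simp only [intCoeff, Int.natCast_nonneg, if_true, Int.toNat_natCast, veronese,
      PowerSeries.coeff_mk]
  · have hneg : (k : ℤ) + r * m < 0 := by nlinarith
    simp [intCoeff, hm.not_ge, hneg.not_ge]

theorem lace_colMat_two (A B : PowerSeries ℝ) (u v : ℤ) :
    lace (colMat ![A, B]) u v = intCoeff (if u % 2 = 0 then A else B) (v - u / 2) := by
  rcases Int.emod_two_eq_zero_or_one u with hu | hu <;> simp [lace, colMat, hu]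

theorem lace_veronese {r k : ℕ} (hk : k < r) (A B : PowerSeries ℝ) (u v : ℤ) :
    lace (colMat ![veronese r k A, veronese r k B]) u v =
      lace (colMat ![A, B]) (2 * r * (u / 2) + u % 2) (k + r * v) := by
  have hrow : 2 * r * (u / 2) + u % 2 = 2 * (r * (u / 2)) + u % 2 := by ring
  have hmod : (2 * (r * (u / 2)) + u % 2) % 2 = u % 2 := by omega
  have hdiv : (2 * (r * (u / 2)) + u % 2) / 2 = r * (u / 2) := by omega
  rw [lace_colMat_two, lace_colMat_two, hrow, hmod, hdiv]
  split_ifs <;> rw [intCoeff_veronese hk, mul_sub, add_sub_assoc]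

theorem strictMono_veronese_row {r : ℕ} (hr : 0 < r) :
    StrictMono fun u : ℤ => 2 * r * (u / 2) + u % 2 := by
  have hsplit : (fun u : ℤ => 2 * r * (u / 2) + u % 2) =
      fun u => u + 2 * ((r : ℤ) - 1) * (u / 2) := by
    funext u; linear_combination Int.mul_ediv_add_emod u 2
  rw [hsplit]
  have hr' : (0 : ℤ) ≤ 2 * ((r : ℤ) - 1) := by omega
  exact strictMono_id.add_monotone
    fun u v huv => mul_le_mul_of_nonneg_left (Int.ediv_le_ediv two_pos huv) hr'

theorem seriesInterlaces_veronese {A B : PowerSeries ℝ} (h : SeriesInterlaces A B)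
    {r k : ℕ} (hk : k < r) : SeriesInterlaces (veronese r k A) (veronese r k B) := by
  have hr : 0 < r := by omega
  have hcol : StrictMono fun v : ℤ => k + r * v :=
    fun _ _ hv => by simpa using mul_lt_mul_of_pos_left hv (Int.natCast_pos.mpr hr)
  have hsub := TP.comp h (strictMono_veronese_row hr) hcol
  unfold SeriesInterlaces FullyInterlacing
  convert hsub using 3 with u v
  exact lace_veronese hk A B u v

theorem stmt16_general (P Q : Polynomial ℝ)
    (h : SeriesInterlaces (P : PowerSeries ℝ) (Q : PowerSeries ℝ))
    (r k : ℕ) (hk : k < r) :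
    SeriesInterlaces (veronese r k (P : PowerSeries ℝ))
      (veronese r k (Q : PowerSeries ℝ)) :=
  seriesInterlaces_veronese h hk

/-- If `P, Q` are real-rooted polynomials with nonnegative coefficients
and `P` interlaces `Q`, then `S_k^{(r)} P` interlaces `S_k^{(r)} Q` for all
`0 ≤ k < r`. (By the Hermite–Biehler theorem, for polynomials the
interlacing relation coincides with total positivity of the interlacing
matrix, which is the definition of `SeriesInterlaces`.) -/
theorem stmt16 (P Q : Polynomial ℝ)
    (h : SeriesInterlaces (P : PowerSeries ℝ) (Q : PowerSeries ℝ))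
    (r k : ℕ) (hr : 0 < r) (hk : k < r) :
    SeriesInterlaces (veronese r k (P : PowerSeries ℝ))
      (veronese r k (Q : PowerSeries ℝ)) :=
  stmt16_general P Q h r k hk
end
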